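/- Let (G,c,R) be a Steiner tree instance and M its canonical merge plan. Then for every nonempty X ⊆ R, drop_G(X) = 2 · value(M, X), where drop_G(X) = TMST_G − TMST_{G/X} and value(M, X) = ∫_0^∞ (|{S ∈ S^t : S ∩ X ≠ ∅}| − 1) dt is the local value of X. -/

import Mathlib

/-- A merge plan on a terminal set `R`: a family of partitions of `R`
(given as setoids, one for each time `t : ℝ`) such that two distinct
terminals `x, y` lie in different parts of the partition at time `t`
if and only if `0 ≤ t ≤ mergeTime x y`. -/
structure MergePlan (R : Type*) where
  rel : ℝ → Setoid R
  mergeTime : R → R → ℝ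
  mergeTime_self : ∀ x : R, mergeTime x x = 0
  mergeTime_nonneg : ∀ x y : R, x ≠ y → 0 ≤ mergeTime x y
  rel_iff : ∀ (t : ℝ) (x y : R), x ≠ y →
    (¬ (rel t).r x y ↔ 0 ≤ t ∧ t ≤ mergeTime x y)

/-- The local value of a merge plan for a terminal set `X`:
`∫_0^∞ (|{parts meeting X}| - 1) dt`. -/
noncomputable def MergePlan.localValue {R : Type*} (M : MergePlan R) (X : Set R) : ℝ :=
  ∫ t in Set.Ioi (0 : ℝ),
    ((Set.ncard (Quotient.mk (M.rel t) '' X) : ℝ) - 1)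

/-- The value of a merge plan: `∫_0^∞ (|S^t| - 1) dt`. -/
noncomputable def MergePlan.value {R : Type*} (M : MergePlan R) : ℝ :=
  M.localValue Set.univ
/-- `minimax u x y` is the minimum over `x`-`y` paths `P` in the complete graph on `R`
of the maximum of `u` over the edges of `P`. Paths are encoded as lists of vertices with
distinct consecutive entries. -/
noncomputable def minimax {R : Type*} (u : Sym2 R → ℝ) (x y : R) : ℝ :=
  sInf {m : ℝ | ∃ l : List R,
    List.Chain' (fun a b => a ≠ b) (x :: l) ∧
    (x :: l).getLast (List.cons_ne_nil x l) = y ∧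
    m = (((x :: l).zip l).map fun p => u s(p.1, p.2)).foldr max 0}
/-- The minimum cost of a spanning tree of the complete graph on `R`
with respect to the edge costs `u`. -/
noncomputable def mstCost {R : Type*} (u : Sym2 R → ℝ) : ℝ :=
  sInf {w : ℝ | ∃ T : Finset (Sym2 R), (∀ e ∈ T, ¬ e.IsDiag) ∧
    (SimpleGraph.fromEdgeSet (↑T : Set (Sym2 R))).Connected ∧
    T.card + 1 = Nat.card R ∧ w = ∑ e ∈ T, u e}
/-- Shortest-path distance in the weighted graph `(G, c)`, as a function on unordered pairs. -/
noncomputable def wdist {V : Type*} (G : SimpleGraph V) (c : Sym2 V → ℝ) : Sym2 V → ℝ :=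
  Sym2.lift ⟨fun x y => sInf {d : ℝ |
      (∃ p : G.Walk x y, d = (p.edges.map c).sum) ∨
      (∃ p : G.Walk y x, d = (p.edges.map c).sum)},
    fun x y => congrArg sInf (Set.ext fun _ => or_comm)⟩

/-- The metric closure of `(G, c)` restricted to a terminal set `R`. -/
noncomputable def restrictDist {V : Type*} (G : SimpleGraph V) (c : Sym2 V → ℝ)
    (R : Finset V) : Sym2 {v : V // v ∈ R} → ℝ :=
  Sym2.lift ⟨fun a b => wdist G c s((a : V), (b : V)), fun a b => by show wdist G c s((a : V), (b : V)) = wdist G c s((b : V), (a : V)); rw [Sym2.eq_swap]⟩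
/-- The setoid on `R` identifying all elements of `X` (and nothing else). -/
def contractSetoid {R : Type*} (X : Set R) : Setoid R where
  r a b := a = b ∨ (a ∈ X ∧ b ∈ X)
  iseqv := ⟨fun _ => Or.inl rfl,
    fun h => h.elim (fun e => Or.inl e.symm) (fun h' => Or.inr ⟨h'.2, h'.1⟩),
    fun h1 h2 => by
      rcases h1 with rfl | ⟨ha, hb⟩
      · exact h2
      · rcases h2 with rfl | ⟨_, hc⟩
        · exact Or.inr ⟨ha, hb⟩
        · exact Or.inr ⟨ha, hc⟩⟩

/-- Edge costs on the quotient of `R` by a setoid `sd`: the minimum of `d`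
over all pairs of representatives. -/
noncomputable def quotCost {R : Type*} (d : Sym2 R → ℝ) (sd : Setoid R) :
    Sym2 (Quotient sd) → ℝ :=
  fun e => sInf {v : ℝ | ∃ a b : R,
    s(Quotient.mk sd a, Quotient.mk sd b) = e ∧ v = d s(a, b)}

/-- `drop(X) = TMST - TMST_{/X}` for the terminal metric `d`. -/
noncomputable def dropCost {R : Type*} (d : Sym2 R → ℝ) (X : Set R) : ℝ :=
  mstCost d - mstCost (quotCost d (contractSetoid X))

/-!
Write `G_t` for the graph whose edges are the pairs of cost `< t`. Kruskal's algorithm (contract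
a cheapest pair and recurse) produces a spanning tree `T` such that `G_t` has exactly
`#{e ∈ T | t ≤ u e} + 1` components for every `t`, while for any connected edge set this count is
an upper bound; integrating over `t > 0` gives `TMST(u) = ∫₀^∞ (#components of G_t - 1) dt`.
Contracting `X` fuses exactly the components of `G_t` that meet `X`, so the integrand drops by
`#(components meeting X) - 1`. Finally, for the costs `d / 2` the partition of the canonical merge
plan at time `t > 0` is the set of components of `G_t`: the minimax value of a pair is below `t`
exactly when a path of pairs cheaper than `t` joins them.
-/

open SimpleGraph
open scoped Finset

section Minimax

variable {S : Type*} (u : Sym2 S → ℝ)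

def thresholdGraph (t : ℝ) : SimpleGraph S :=
  fromEdgeSet {e | u e < t}

/-- The quantity minimized in `minimax`. -/
def pathMax (x : S) (l : List S) : ℝ :=
  (((x :: l).zip l).map fun p => u s(p.1, p.2)).foldr max 0

variable {u}

lemma pathMax_cons (x a : S) (l : List S) :
    pathMax u x (a :: l) = max (u s(x, a)) (pathMax u a l) := rfl

lemma pathMax_nonneg (x : S) (l : List S) : 0 ≤ pathMax u x l := by
  induction l generalizing x with
  | nil => rfl
  | cons a l ih => exact le_max_of_le_right (ih a)

lemma reachable_of_pathMax_lt {t : ℝ} {x : S} {l : List S}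
    (hl : List.IsChain (· ≠ ·) (x :: l)) (hlt : pathMax u x l < t) :
    (thresholdGraph u t).Reachable x ((x :: l).getLast (List.cons_ne_nil x l)) := by
  induction l generalizing x with
  | nil => rfl
  | cons a l ih =>
    rw [List.isChain_cons_cons] at hl
    rw [pathMax_cons, max_lt_iff] at hlt
    have hxa : (thresholdGraph u t).Adj x a := (fromEdgeSet_adj _).2 ⟨hlt.1, hl.1⟩
    rw [List.getLast_cons (List.cons_ne_nil a l)]
    exact hxa.reachable.trans (ih hl.2 hlt.2)

lemma exists_pathMax_lt_of_reachable {t : ℝ} (ht : 0 < t) {x y : S}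
    (h : (thresholdGraph u t).Reachable x y) :
    ∃ l : List S, List.IsChain (· ≠ ·) (x :: l) ∧
      (x :: l).getLast (List.cons_ne_nil x l) = y ∧ pathMax u x l < t := by
  obtain ⟨p⟩ := h
  induction p with
  | nil => exact ⟨[], .singleton _, rfl, ht⟩
  | @cons x z y hxz _ ih =>
    obtain ⟨l, hl, hlast, hlt⟩ := ih
    rw [thresholdGraph, fromEdgeSet_adj] at hxz
    refine ⟨z :: l, List.IsChain.cons_cons hxz.2 hl, ?_, ?_⟩
    · rwa [List.getLast_cons (List.cons_ne_nil z l)]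
    · exact (pathMax_cons x z l).trans_lt (max_lt hxz.1 hlt)

lemma minimax_lt_iff_reachable {t : ℝ} (ht : 0 < t) {x y : S} :
    minimax u x y < t ↔ (thresholdGraph u t).Reachable x y := by
  have hbdd : BddBelow {m : ℝ | ∃ l : List S, List.IsChain (· ≠ ·) (x :: l) ∧
      (x :: l).getLast (List.cons_ne_nil x l) = y ∧ m = pathMax u x l} :=
    ⟨0, by rintro _ ⟨l, -, -, rfl⟩; exact pathMax_nonneg x l⟩
  constructor
  · intro h
    by_contra hxy
    have hne : x ≠ y := fun e => hxy (e ▸ Reachable.refl x)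
    refine h.not_ge (le_csInf ⟨_, [y], List.IsChain.cons_cons hne (.singleton y), rfl, rfl⟩ ?_)
    rintro _ ⟨l, hl, hlast, rfl⟩
    by_contra hlt
    exact hxy (hlast ▸ reachable_of_pathMax_lt hl (not_le.1 hlt))
  · intro h
    obtain ⟨l, hl, hlast, hlt⟩ := exists_pathMax_lt_of_reachable ht h
    exact (csInf_le hbdd ⟨l, hl, hlast, rfl⟩).trans_lt hlt

end Minimax

lemma MergePlan.rel_eq_reachableSetoid {S : Type*} (M : MergePlan S) {u : Sym2 S → ℝ}
    (hM : ∀ x y, x ≠ y → M.mergeTime x y = minimax u x y) {t : ℝ} (ht : 0 < t) :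
    M.rel t = (thresholdGraph u t).reachableSetoid := by
  ext x y
  by_cases hxy : x = y
  · subst hxy
    exact iff_of_true ((M.rel t).refl x) (Reachable.refl x)
  · change (M.rel t).r x y ↔ (thresholdGraph u t).Reachable x y
    rw [← not_iff_not, M.rel_iff t x y hxy, hM x y hxy, ← minimax_lt_iff_reachable ht, not_lt]
    exact and_iff_right ht.le

section Contraction

variable {S : Type*}

lemma Nat.card_eq_of_ker_eq {B C : Type*} {f : S → B} {g : S → C} (hf : Function.Surjective f)
    (hg : Function.Surjective g) (hker : Setoid.ker f = Setoid.ker g) :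
    Nat.card B = Nat.card C := by
  rw [← Nat.card_congr (Setoid.quotientKerEquivOfSurjective f hf), hker,
    Nat.card_congr (Setoid.quotientKerEquivOfSurjective g hg)]

lemma card_quotient_contractSetoid_add_ncard [Finite S] {W : Set S} (hW : W.Nonempty) :
    Nat.card (Quotient (contractSetoid W)) + W.ncard = Nat.card S + 1 := by
  obtain ⟨w, hw⟩ := hW
  have hinj : Set.InjOn (Quotient.mk (contractSetoid W)) (insert w Wᶜ) := by
    rintro a ha b hb hab
    rcases Quotient.exact hab with h | ⟨haW, hbW⟩
    · exact h
    · rw [Set.mem_insert_iff, Set.mem_compl_iff] at ha hb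
      rw [ha.resolve_right (not_not.2 haW), hb.resolve_right (not_not.2 hbW)]
  have himage : Quotient.mk (contractSetoid W) '' insert w Wᶜ = Set.univ := by
    refine Set.eq_univ_of_forall (Quotient.ind fun a => ?_)
    by_cases ha : a ∈ W
    · exact ⟨w, Set.mem_insert w _, Quotient.sound (Or.inr ⟨hw, ha⟩)⟩
    · exact ⟨a, Set.mem_insert_of_mem w ha, rfl⟩
  rw [← Set.ncard_univ, ← himage, hinj.ncard_image,
    Set.ncard_insert_of_notMem (not_not.2 hw), ← Set.ncard_add_ncard_compl W]
  ring

lemma card_quotient_contractSetoid_pair_add_one [Finite S] {a b : S} (hab : a ≠ b) :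
    Nat.card (Quotient (contractSetoid ({a, b} : Set S))) + 1 = Nat.card S := by
  have := card_quotient_contractSetoid_add_ncard (Set.insert_nonempty a {b})
  rw [Set.ncard_pair hab] at this
  omega

lemma SimpleGraph.Reachable.map_fromEdgeSet {T : Type*} {s : Set (Sym2 S)} (f : S → T) {x y : S}
    (h : (fromEdgeSet s).Reachable x y) :
    (fromEdgeSet (Sym2.map f '' s)).Reachable (f x) (f y) := by
  rw [reachable_iff_reflTransGen] at h ⊢
  refine Relation.ReflTransGen.lift' f
    (fun a b hab => show Relation.ReflTransGen _ (f a) (f b) from ?_) x y h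
  by_cases hf : f a = f b
  · exact hf ▸ .refl
  · exact .single ((fromEdgeSet_adj _).2 ⟨⟨_, ((fromEdgeSet_adj _).1 hab).1, rfl⟩, hf⟩)

lemma rel_of_reachable_fromEdgeSet_map {σ τ : Setoid S} {s : Set (Sym2 S)} (hστ : σ ≤ τ)
    (hs : ∀ a b, s(a, b) ∈ s → τ a b) {x y : S}
    (h : (fromEdgeSet (Sym2.map (Quotient.mk σ) '' s)).Reachable ⟦x⟧ ⟦y⟧) : τ x y := by
  have hmk : ∀ a b, (⟦a⟧ : Quotient σ) = ⟦b⟧ → τ a b :=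
    fun a b hab => hστ (Quotient.exact hab)
  obtain ⟨p⟩ := h
  suffices ∀ {p q : Quotient σ} (_ : (fromEdgeSet (Sym2.map (Quotient.mk σ) '' s)).Walk p q)
      (x y : S), ⟦x⟧ = p → ⟦y⟧ = q → τ x y from this p x y rfl rfl
  intro p q w
  induction w with
  | nil => exact fun x y hx hy => hmk x y (hx.trans hy.symm)
  | @cons p r q hpr _ ih =>
    intro x y hx hy
    obtain ⟨z, rfl⟩ := Quotient.exists_rep r
    obtain ⟨⟨e, he, hep⟩, -⟩ := (fromEdgeSet_adj _).1 hpr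
    induction e using Sym2.ind with
    | _ c d =>
    rw [Sym2.map_mk, Sym2.eq_iff] at hep
    refine τ.trans ?_ (ih z y rfl hy)
    rcases hep with ⟨hc, hd⟩ | ⟨hc, hd⟩
    · exact τ.trans (hmk x c (hx.trans hc.symm)) (τ.trans (hs c d he) (hmk d z hd))
    · exact τ.trans (hmk x d (hx.trans hd.symm)) (τ.trans (τ.symm (hs c d he)) (hmk c z hc))

theorem card_connectedComponent_contract_add_ncard [Finite S] (s : Set (Sym2 S)) {X : Set S}
    (hX : X.Nonempty) :
    Nat.card (fromEdgeSet (Sym2.map (Quotient.mk (contractSetoid X)) '' s)).ConnectedComponent +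
      ((fromEdgeSet s).connectedComponentMk '' X).ncard =
    Nat.card (fromEdgeSet s).ConnectedComponent + 1 := by
  set σ := contractSetoid X
  set H := fromEdgeSet s
  set H' := fromEdgeSet (Sym2.map (Quotient.mk σ) '' s)
  set W := H.connectedComponentMk '' X
  have hcard : Nat.card H'.ConnectedComponent = Nat.card (Quotient (contractSetoid W)) := by
    refine Nat.card_eq_of_ker_eq (f := fun x => H'.connectedComponentMk ⟦x⟧)
      (g := fun x => ⟦H.connectedComponentMk x⟧)
      ((Quot.mk_surjective : Function.Surjective H'.connectedComponentMk).comp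
        Quotient.mk_surjective)
      (Quotient.mk_surjective.comp Quot.mk_surjective) (Setoid.ext fun x y => ?_)
    change _ = _ ↔ _ = _
    rw [ConnectedComponent.eq, Quotient.eq_iff_equiv]
    constructor
    · refine rel_of_reachable_fromEdgeSet_map
        (τ := (contractSetoid W).comap H.connectedComponentMk) ?_ (fun a b hab => ?_)
      · rintro a b (rfl | ⟨ha, hb⟩)
        exacts [Or.inl rfl, Or.inr ⟨⟨a, ha, rfl⟩, ⟨b, hb, rfl⟩⟩]
      · by_cases h : a = b
        · exact Or.inl (congrArg _ h)
        · exact Or.inl (ConnectedComponent.sound ((fromEdgeSet_adj _).2 ⟨hab, h⟩).reachable)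
    · rintro (hxy | ⟨⟨p, hp, hpx⟩, ⟨q, hq, hqy⟩⟩)
      · exact (ConnectedComponent.exact hxy).map_fromEdgeSet _
      · have hpq : (⟦p⟧ : Quotient σ) = ⟦q⟧ := Quotient.sound (Or.inr ⟨hp, hq⟩)
        refine ((ConnectedComponent.exact hpx).symm.map_fromEdgeSet _).trans ?_
        exact hpq ▸ (ConnectedComponent.exact hqy).map_fromEdgeSet _
  rw [hcard]
  exact card_quotient_contractSetoid_add_ncard (hX.image _)

end Contraction

section QuotCost

variable {S : Type*} (u : Sym2 S → ℝ) (σ : Setoid S)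

lemma quotCost_eq_sInf_image (e : Sym2 (Quotient σ)) :
    quotCost u σ e = sInf (u '' {e₀ | Sym2.map (Quotient.mk σ) e₀ = e}) := by
  refine congrArg sInf (Set.ext fun v => ⟨?_, ?_⟩)
  · rintro ⟨a, b, rfl, rfl⟩
    exact ⟨s(a, b), Sym2.map_mk _ _ _, rfl⟩
  · rintro ⟨e₀, rfl, rfl⟩
    induction e₀ using Sym2.ind with
    | _ a b => exact ⟨a, b, (Sym2.map_mk _ _ _).symm, rfl⟩

lemma quotCost_const_mul {c : ℝ} (hc : 0 ≤ c) :
    quotCost (fun e => c * u e) σ = fun e => c * quotCost u σ e := by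
  ext e
  rw [quotCost_eq_sInf_image, quotCost_eq_sInf_image, ← smul_eq_mul,
    ← Real.sInf_smul_of_nonneg hc, ← Set.image_smul, Set.image_image]
  rfl

lemma nonempty_quotCost_set (e : Sym2 (Quotient σ)) :
    (u '' {e₀ | Sym2.map (Quotient.mk σ) e₀ = e}).Nonempty := by
  induction e using Sym2.ind with
  | _ p q =>
    induction p, q using Quotient.inductionOn₂ with
    | _ a b => exact ⟨_, s(a, b), Sym2.map_mk _ _ _, rfl⟩

variable [Finite S]

lemma exists_quotCost_eq (e : Sym2 (Quotient σ)) :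
    ∃ e₀, Sym2.map (Quotient.mk σ) e₀ = e ∧ u e₀ = quotCost u σ e := by
  rw [quotCost_eq_sInf_image]
  exact (nonempty_quotCost_set u σ e).csInf_mem (Set.toFinite _)

lemma thresholdGraph_quotCost (t : ℝ) :
    thresholdGraph (quotCost u σ) t =
      fromEdgeSet (Sym2.map (Quotient.mk σ) '' {e | u e < t}) := by
  ext p q
  simp only [thresholdGraph, fromEdgeSet_adj, Set.mem_ofPred_eq, quotCost_eq_sInf_image,
    csInf_lt_iff (Set.toFinite _).bddBelow (nonempty_quotCost_set u σ _), Set.mem_image]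
  aesop

end QuotCost

lemma mstCost_const_mul {S : Type*} (u : Sym2 S → ℝ) {c : ℝ} (hc : 0 ≤ c) :
    mstCost (fun e => c * u e) = c * mstCost u := by
  rw [mstCost, mstCost, ← smul_eq_mul, ← Real.sInf_smul_of_nonneg hc]
  refine congrArg sInf (Set.ext fun w => ?_)
  simp only [Set.mem_smul_set, Set.mem_ofPred_eq, ← Finset.mul_sum, smul_eq_mul]
  aesop

lemma dropCost_const_mul {S : Type*} (u : Sym2 S → ℝ) (X : Set S) {c : ℝ} (hc : 0 ≤ c) :
    dropCost (fun e => c * u e) X = c * dropCost u X := by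
  rw [dropCost, dropCost, quotCost_const_mul u _ hc, mstCost_const_mul _ hc,
    mstCost_const_mul _ hc, mul_sub]

/-- The conditions on `T` in `mstCost`. -/
structure IsSpanningTree {S : Type*} (T : Finset (Sym2 S)) : Prop where
  not_isDiag : ∀ e ∈ T, ¬ e.IsDiag
  connected : (fromEdgeSet (T : Set (Sym2 S))).Connected
  card_add_one : T.card + 1 = Nat.card S

section Kruskal

variable {S : Type*} {u : Sym2 S → ℝ}

lemma ncard_connectedComponentMk_image_pair {a b : S} (hab : a ≠ b)
    (hmin : ∀ p q : S, p ≠ q → u s(a, b) ≤ u s(p, q)) (t : ℝ) :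
    ((thresholdGraph u t).connectedComponentMk '' {a, b}).ncard =
      if t ≤ u s(a, b) then 2 else 1 := by
  rw [Set.image_pair]
  split_ifs with ht
  · have hbot : thresholdGraph u t = ⊥ := by
      ext p q
      simp only [thresholdGraph, fromEdgeSet_adj, Set.mem_ofPred_eq, bot_adj, iff_false, not_and]
      exact fun hlt hpq => (ht.trans (hmin p q hpq)).not_gt hlt
    refine Set.ncard_pair fun h => hab ?_
    rwa [ConnectedComponent.eq, hbot, reachable_bot] at h
  · have hadj : (thresholdGraph u t).Adj a b := (fromEdgeSet_adj _).2 ⟨not_le.1 ht, hab⟩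
    rw [ConnectedComponent.sound hadj.reachable, Set.pair_eq_singleton, Set.ncard_singleton]

lemma mk_notMem_image_of_map_eq [DecidableEq S] {a b : S}
    {lift : Sym2 (Quotient (contractSetoid ({a, b} : Set S))) → Sym2 S}
    (hlift : ∀ e, Sym2.map (Quotient.mk _) (lift e) = e)
    {T' : Finset (Sym2 (Quotient (contractSetoid ({a, b} : Set S))))}
    (hT' : ∀ e ∈ T', ¬ e.IsDiag) :
    s(a, b) ∉ T'.image lift := by
  intro hab
  obtain ⟨e, he, hlab⟩ := Finset.mem_image.1 hab
  refine hT' e he ?_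
  rw [← hlift e, hlab, Sym2.map_mk, Sym2.mk_isDiag_iff]
  exact Quotient.sound (Or.inr ⟨.inl rfl, .inr rfl⟩)

lemma IsSpanningTree.insert_image_of_map_eq [Finite S] [DecidableEq S] {a b : S} (hab : a ≠ b)
    {lift : Sym2 (Quotient (contractSetoid ({a, b} : Set S))) → Sym2 S}
    (hlift : ∀ e, Sym2.map (Quotient.mk _) (lift e) = e)
    {T' : Finset (Sym2 (Quotient (contractSetoid ({a, b} : Set S))))} (hT' : IsSpanningTree T') :
    IsSpanningTree (insert s(a, b) (T'.image lift)) := by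
  set T := insert s(a, b) (T'.image lift)
  have hreach : ∀ c d, s(c, d) ∈ T → (fromEdgeSet (T : Set (Sym2 S))).Reachable c d := by
    intro c d hcd
    by_cases h : c = d
    · exact h ▸ Reachable.refl c
    · exact ((fromEdgeSet_adj _).2 ⟨hcd, h⟩).reachable
  refine ⟨fun e he => ?_, ?_, ?_⟩
  · rcases Finset.mem_insert.1 he with rfl | he
    · exact Sym2.mk_isDiag_iff.not.2 hab
    · obtain ⟨e', he', rfl⟩ := Finset.mem_image.1 he
      exact fun hdiag => hT'.not_isDiag e' he' (hlift e' ▸ hdiag.map)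
  · have : Nonempty S := ⟨a⟩
    have hrab : (fromEdgeSet (T : Set (Sym2 S))).Reachable a b :=
      hreach a b (Finset.mem_insert_self _ _)
    refine ⟨fun x y => rel_of_reachable_fromEdgeSet_map (σ := contractSetoid {a, b})
      (s := ↑(T'.image lift)) (τ := (fromEdgeSet (T : Set (Sym2 S))).reachableSetoid) ?_
      (fun c d hcd => hreach c d (Finset.mem_insert_of_mem hcd)) ?_⟩
    · rintro x y (rfl | ⟨rfl | rfl, rfl | rfl⟩)
      exacts [Reachable.refl _, Reachable.refl _, hrab, hrab.symm, Reachable.refl _]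
    · rw [Finset.coe_image, Set.image_image]
      simpa only [hlift, Set.image_id'] using hT'.connected.preconnected _ _
  · have hcard := card_quotient_contractSetoid_pair_add_one hab
    rw [Finset.card_insert_of_notMem (mk_notMem_image_of_map_eq hlift hT'.not_isDiag),
      Finset.card_image_of_injective _ (Function.LeftInverse.injective hlift), hT'.card_add_one]
    omega

variable [Finite S]

lemma exists_min_offDiag [Nontrivial S] (u : Sym2 S → ℝ) :
    ∃ a b : S, a ≠ b ∧ ∀ p q : S, p ≠ q → u s(a, b) ≤ u s(p, q) := by
  obtain ⟨x, y, hxy⟩ := exists_pair_ne S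
  obtain ⟨e, he, hmin⟩ := Set.exists_min_image {e : Sym2 S | ¬ e.IsDiag} u (Set.toFinite _)
    ⟨s(x, y), Sym2.mk_isDiag_iff.not.2 hxy⟩
  induction e using Sym2.ind with
  | _ a b =>
    exact ⟨a, b, Sym2.mk_isDiag_iff.not.1 he,
      fun p q hpq => hmin s(p, q) (Sym2.mk_isDiag_iff.not.2 hpq)⟩

lemma card_connectedComponent_thresholdGraph_quotCost_add_ncard (u : Sym2 S → ℝ) (t : ℝ)
    {X : Set S} (hX : X.Nonempty) :
    Nat.card (thresholdGraph (quotCost u (contractSetoid X)) t).ConnectedComponent +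
      ((thresholdGraph u t).connectedComponentMk '' X).ncard =
    Nat.card (thresholdGraph u t).ConnectedComponent + 1 := by
  rw [thresholdGraph_quotCost]
  exact card_connectedComponent_contract_add_ncard _ hX

lemma exists_isSpanningTree_of_contract {a b : S} (hab : a ≠ b)
    (hmin : ∀ p q : S, p ≠ q → u s(a, b) ≤ u s(p, q))
    {T' : Finset (Sym2 (Quotient (contractSetoid ({a, b} : Set S))))} (hT' : IsSpanningTree T')
    (hT'card : ∀ t,
      Nat.card (thresholdGraph (quotCost u (contractSetoid {a, b})) t).ConnectedComponent =
        #{e ∈ T' | t ≤ quotCost u (contractSetoid {a, b}) e} + 1) :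
    ∃ T : Finset (Sym2 S), IsSpanningTree T ∧
      ∀ t, Nat.card (thresholdGraph u t).ConnectedComponent = #{e ∈ T | t ≤ u e} + 1 := by
  classical
  choose lift hlift using exists_quotCost_eq u (contractSetoid ({a, b} : Set S))
  have hlift_inj : Function.Injective lift := Function.LeftInverse.injective fun e => (hlift e).1
  have hnotMem := mk_notMem_image_of_map_eq (fun e => (hlift e).1) hT'.not_isDiag
  refine ⟨_, hT'.insert_image_of_map_eq hab fun e => (hlift e).1, fun t => ?_⟩
  have hlift_card : #{e ∈ T'.image lift | t ≤ u e} = #{e ∈ T' | t ≤ quotCost u _ e} := by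
    rw [Finset.filter_image, Finset.card_image_of_injective _ hlift_inj]
    simp only [hlift]
  have := card_connectedComponent_thresholdGraph_quotCost_add_ncard u t
    (Set.insert_nonempty a {b})
  rw [hT'card, ncard_connectedComponentMk_image_pair hab hmin, ← hlift_card] at this
  rw [Finset.filter_insert]
  split_ifs at this ⊢
  · rw [Finset.card_insert_of_notMem fun h => hnotMem (Finset.mem_filter.1 h).1]
    omega
  · omega

theorem exists_isSpanningTree_card_connectedComponent [Nonempty S] (u : Sym2 S → ℝ) :
    ∃ T : Finset (Sym2 S), IsSpanningTree T ∧
      ∀ t, Nat.card (thresholdGraph u t).ConnectedComponent = #{e ∈ T | t ≤ u e} + 1 := by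
  induction hn : Nat.card S using Nat.strong_induction_on generalizing S with
  | _ n ih =>
  rcases subsingleton_or_nontrivial S with hS | hS
  · refine ⟨∅, ⟨by simp, ⟨.of_subsingleton⟩, ?_⟩, fun t => ?_⟩
    · rw [Finset.card_empty, Nat.card_of_subsingleton (Classical.arbitrary S)]
    · rw [Finset.filter_empty, Finset.card_empty, Nat.card_of_subsingleton (Classical.arbitrary _)]
  · obtain ⟨a, b, hab, hmin⟩ := exists_min_offDiag u
    have hcard := card_quotient_contractSetoid_pair_add_one hab
    have : Nonempty (Quotient (contractSetoid ({a, b} : Set S))) := ⟨⟦a⟧⟩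
    obtain ⟨T', hT', hT'card⟩ := ih _ (by omega) (quotCost u (contractSetoid {a, b})) rfl
    exact exists_isSpanningTree_of_contract hab hmin hT' hT'card

lemma card_connectedComponent_thresholdGraph_le (u : Sym2 S → ℝ) (t : ℝ)
    {T : Finset (Sym2 S)} (hT : (fromEdgeSet (T : Set (Sym2 S))).Connected) :
    Nat.card (thresholdGraph u t).ConnectedComponent ≤ #{e ∈ T | t ≤ u e} + 1 := by
  classical
  set G := thresholdGraph u t
  set K := fromEdgeSet (Sym2.map G.connectedComponentMk '' (T : Set (Sym2 S)))
  have hK : K.Connected := by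
    have : Nonempty S := hT.nonempty
    refine ⟨fun c d => ?_⟩
    induction c using ConnectedComponent.ind with | _ x =>
    induction d using ConnectedComponent.ind with | _ y =>
    exact (hT.preconnected x y).map_fromEdgeSet _
  -- an edge of `T` below the threshold joins two vertices of the same component
  have hedges : K.edgeSet ⊆ Sym2.map G.connectedComponentMk '' ↑({e ∈ T | t ≤ u e}) := by
    rw [edgeSet_fromEdgeSet]
    rintro _ ⟨⟨e, he, rfl⟩, hnd⟩
    refine ⟨e, Finset.mem_filter.2 ⟨he, not_lt.1 fun hlt => hnd ?_⟩, rfl⟩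
    induction e using Sym2.ind with | _ x y =>
    rw [Sym2.mem_diagSet, Sym2.map_mk, Sym2.mk_isDiag_iff]
    by_cases hxy : x = y
    · rw [hxy]
    · exact ConnectedComponent.sound ((fromEdgeSet_adj _).2 ⟨hlt, hxy⟩).reachable
  calc Nat.card G.ConnectedComponent ≤ Nat.card K.edgeSet + 1 :=
        hK.card_vert_le_card_edgeSet_add_one
    _ ≤ #{e ∈ T | t ≤ u e} + 1 := by
        rw [Nat.card_coe_set_eq, ← Set.ncard_coe_finset]
        gcongr
        exact (Set.ncard_le_ncard hedges (Set.toFinite _)).trans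
          (Set.ncard_image_le (Set.toFinite _))

end Kruskal

section LayerCake

open MeasureTheory

lemma integrableOn_Ioi_indicator_Iic (a : ℝ) :
    IntegrableOn ((Set.Iic a).indicator (1 : ℝ → ℝ)) (Set.Ioi 0) := by
  unfold IntegrableOn
  rw [integrable_indicator_iff measurableSet_Iic]
  refine integrableOn_const ?_
  rw [Measure.restrict_apply measurableSet_Iic, Set.Iic_inter_Ioi]
  exact measure_Ioc_lt_top.ne

variable {ι : Type*} (u : ι → ℝ) (T : Finset ι)

lemma card_filter_le_eq_sum_indicator (t : ℝ) :
    (#{e ∈ T | t ≤ u e} : ℝ) = ∑ e ∈ T, (Set.Iic (u e)).indicator 1 t := by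
  rw [Finset.natCast_card_filter]
  rfl

lemma integrableOn_card_filter_le :
    IntegrableOn (fun t => (#{e ∈ T | t ≤ u e} : ℝ)) (Set.Ioi 0) := by
  simp_rw [card_filter_le_eq_sum_indicator]
  exact integrable_finsetSum _ fun e _ => integrableOn_Ioi_indicator_Iic (u e)

lemma integral_card_filter_le (hu : ∀ e, 0 ≤ u e) :
    ∫ t in Set.Ioi 0, (#{e ∈ T | t ≤ u e} : ℝ) = ∑ e ∈ T, u e := by
  simp_rw [card_filter_le_eq_sum_indicator]
  rw [integral_finsetSum _ fun e _ => integrableOn_Ioi_indicator_Iic (u e)]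
  refine Finset.sum_congr rfl fun e _ => ?_
  rw [setIntegral_indicator measurableSet_Iic, Set.Ioi_inter_Iic, Pi.one_def, setIntegral_const,
    Real.volume_real_Ioc_of_le (hu e), smul_eq_mul, mul_one, sub_zero]

end LayerCake

section MinimumSpanningTree

open MeasureTheory

variable {S : Type*} [Finite S] [Nonempty S] (u : Sym2 S → ℝ)

lemma integrableOn_card_connectedComponent_sub_one :
    IntegrableOn (fun t => (Nat.card (thresholdGraph u t).ConnectedComponent : ℝ) - 1)
      (Set.Ioi 0) := by
  obtain ⟨T, -, hT⟩ := exists_isSpanningTree_card_connectedComponent u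
  simpa [hT] using integrableOn_card_filter_le u T

theorem mstCost_eq_integral (hu : ∀ e, 0 ≤ u e) :
    mstCost u =
      ∫ t in Set.Ioi 0, ((Nat.card (thresholdGraph u t).ConnectedComponent : ℝ) - 1) := by
  obtain ⟨T, hT, hTcard⟩ := exists_isSpanningTree_card_connectedComponent u
  have hT_integral : ∫ t in Set.Ioi 0,
      ((Nat.card (thresholdGraph u t).ConnectedComponent : ℝ) - 1) = ∑ e ∈ T, u e := by
    simpa [hTcard] using integral_card_filter_le u T hu
  rw [hT_integral]
  refine IsLeast.csInf_eq ⟨⟨T, hT.not_isDiag, hT.connected, hT.card_add_one, rfl⟩, ?_⟩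
  rintro _ ⟨T', -, hT'conn, -, rfl⟩
  rw [← integral_card_filter_le u T hu, ← integral_card_filter_le u T' hu]
  refine setIntegral_mono_on (integrableOn_card_filter_le u T) (integrableOn_card_filter_le u T')
    measurableSet_Ioi fun t _ => ?_
  have := card_connectedComponent_thresholdGraph_le u t hT'conn
  rw [hTcard] at this
  exact_mod_cast Nat.le_of_add_le_add_right this

end MinimumSpanningTree

theorem dropCost_eq_integral {S : Type*} [Finite S] {u : Sym2 S → ℝ} (hu : ∀ e, 0 ≤ u e)
    {X : Set S} (hX : X.Nonempty) :
    dropCost u X = ∫ t in Set.Ioi 0,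
      (((thresholdGraph u t).connectedComponentMk '' X).ncard - 1 : ℝ) := by
  have : Nonempty S := hX.to_subtype.map Subtype.val
  have : Nonempty (Quotient (contractSetoid X)) := .map (Quotient.mk _) ‹_›
  have hu' : ∀ e, 0 ≤ quotCost u (contractSetoid X) e := fun e => by
    obtain ⟨e₀, -, he₀⟩ := exists_quotCost_eq u (contractSetoid X) e
    exact he₀ ▸ hu e₀
  rw [dropCost, mstCost_eq_integral u hu, mstCost_eq_integral _ hu',
    ← MeasureTheory.integral_sub (integrableOn_card_connectedComponent_sub_one u)
      (integrableOn_card_connectedComponent_sub_one _)]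
  refine MeasureTheory.integral_congr_ae (Filter.Eventually.of_forall fun t => ?_)
  have := card_connectedComponent_thresholdGraph_quotCost_add_ncard u t hX
  dsimp only
  rw [← Nat.cast_inj (R := ℝ)] at this
  push_cast at this
  linarith

lemma wdist_nonneg {V : Type*} {G : SimpleGraph V} {c : Sym2 V → ℝ}
    (hc : ∀ e ∈ G.edgeSet, 0 < c e) (e : Sym2 V) : 0 ≤ wdist G c e := by
  induction e using Sym2.ind with | _ x y =>
  refine Real.sInf_nonneg ?_
  rintro _ (⟨p, rfl⟩ | ⟨p, rfl⟩) <;>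
  · refine List.sum_nonneg fun r hr => ?_
    obtain ⟨e, he, rfl⟩ := List.mem_map.1 hr
    exact (hc e (p.edges_subset_edgeSet he)).le

lemma restrictDist_nonneg {V : Type*} {G : SimpleGraph V} {c : Sym2 V → ℝ}
    (hc : ∀ e ∈ G.edgeSet, 0 < c e) (R : Finset V) (e : Sym2 {v : V // v ∈ R}) :
    0 ≤ restrictDist G c R e := by
  induction e using Sym2.ind with | _ x y => exact wdist_nonneg hc s((x : V), (y : V))

theorem drop_eq_two_mul_localValue_general {V : Type*}
    (G : SimpleGraph V)
    (c : Sym2 V → ℝ) (hc : ∀ e ∈ G.edgeSet, 0 < c e)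
    (R : Finset V)
    (M : MergePlan {v : V // v ∈ R})
    (hM : ∀ x y : {v : V // v ∈ R}, x ≠ y →
      M.mergeTime x y = minimax (fun e => restrictDist G c R e / 2) x y)
    (X : Set {v : V // v ∈ R}) (hX : X.Nonempty) :
    dropCost (restrictDist G c R) X = 2 * M.localValue X := by
  set u := fun e => restrictDist G c R e / 2
  have hu : ∀ e, 0 ≤ u e := fun e => div_nonneg (restrictDist_nonneg hc R e) zero_le_two
  have hdist : restrictDist G c R = fun e => 2 * u e :=
    funext fun e => (mul_div_cancel₀ _ two_ne_zero).symm
  rw [hdist, dropCost_const_mul u X zero_le_two, dropCost_eq_integral hu hX, MergePlan.localValue]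
  refine congrArg (2 * ·) (MeasureTheory.setIntegral_congr_fun measurableSet_Ioi fun t ht => ?_)
  rw [M.rel_eq_reachableSetoid hM ht]
  rfl

/-- For the canonical merge plan `M` of a Steiner tree instance
`(G, c, R)` and every nonempty terminal set `X ⊆ R`,
`drop_G(X) = TMST_G - TMST_{G/X} = 2 · value(M, X)`. -/
theorem drop_eq_two_mul_localValue {V : Type*} [Fintype V]
    (G : SimpleGraph V) (hG : G.Connected)
    (c : Sym2 V → ℝ) (hc : ∀ e ∈ G.edgeSet, 0 < c e)
    (R : Finset V) (hR : R.Nonempty)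
    (M : MergePlan {v : V // v ∈ R})
    (hM : ∀ x y : {v : V // v ∈ R}, x ≠ y →
      M.mergeTime x y = minimax (fun e => restrictDist G c R e / 2) x y)
    (X : Set {v : V // v ∈ R}) (hX : X.Nonempty) :
    dropCost (restrictDist G c R) X = 2 * M.localValue X :=
  drop_eq_two_mul_localValue_general G c hc R M hM X hX
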